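/- Let G be a finite simple graph, let R and S be disjoint subsets of V(G), and let T = R ∪ S. Let σ_T be a T-signature, σ_R an R-signature and σ_S an S-signature such that the triple (σ_T, σ_R, σ_S) is compatible, there exists a valid partial b-coloring of G[R] with k colors whose R-signature is σ_R, and there exists a valid partial b-coloring of G[S] with k colors whose S-signature is σ_S. Then there exists a valid partial b-coloring of G[T] with k colors whose T-signature is σ_T. -/

import Mathlib

/-!
Pair the color classes of the two colorings. The function `f` witnessing compatibility of the
signatures prescribes how many `R`-classes of type `ρ` are paired with `S`-classes of type `σ`;
as its margins are `σR` and `σS`, such a pairing is realized by a permutation of the colors.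
Compatibility of two paired types is exactly what makes the union of the two classes independent,
with at most one `b`-vertex, and valid, and the `T`-type of the union is the merge type of the
two; hence the glued coloring has signature `σT`.
-/

open scoped Classical

namespace BCol

/-- The three possible descriptions of a color class on an equivalence class:
`none`, `contains`, or `demand`. -/
inductive Desc where
  | none
  | contains
  | demand
deriving DecidableEq

variable {V : Type*}

/-- The neighborhood of `v` outside of `U`, i.e. `N_G(v) \ U`. -/
def extN (G : SimpleGraph V) (U : Set V) (v : V) : Set V := G.neighborSet v \ U

/-- The `~_U`-equivalence class of `u`: the vertices of `U` with the same
neighborhood outside of `U` as `u`. -/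
def cls (G : SimpleGraph V) (U : Set V) (u : V) : Set V :=
  {v | v ∈ U ∧ extN G U v = extN G U u}

/-- The set of equivalence classes `U/~_U`. -/
def eqClasses (G : SimpleGraph V) (U : Set V) : Set (Set V) :=
  {Q | ∃ u ∈ U, Q = cls G U u}

/-- The equivalence classes of `~_U`, as a type. -/
abbrev Classes (G : SimpleGraph V) (U : Set V) := {Q // Q ∈ eqClasses G U}

/-- A `U`-type: a pair of a map `U/~_U → {none, contains, demand}` and a bit. -/
abbrev UType (G : SimpleGraph V) (U : Set V) := (Classes G U → Desc) × Bool

/-- The neighborhood of `v` in the induced subgraph `G[U]`. -/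
def indN (G : SimpleGraph V) (U : Set V) (v : V) : Set V := G.neighborSet v ∩ U

/-- `C` is an independent set of the induced subgraph `G[U]`. -/
def IndepIn (G : SimpleGraph V) (U C : Set V) : Prop :=
  C ⊆ U ∧ ∀ u ∈ C, ∀ v ∈ C, ¬ G.Adj u v

/-- The `desc`-component of the `U`-type of the color class `C` relative to the set `B`
of partial `b`-vertices. -/
noncomputable def descOf (G : SimpleGraph V) (U B C : Set V) (Q : Classes G U) : Desc :=
  if (Q.1 ∩ C).Nonempty then Desc.contains
  else if ∃ v ∈ B ∩ Q.1, indN G U v ∩ C = ∅ then Desc.demand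
  else Desc.none

/-- The `U`-type of the color class `C` relative to the set `B` of partial `b`-vertices. -/
noncomputable def typeOf (G : SimpleGraph V) (U B C : Set V) : UType G U :=
  (descOf G U B C, if (C ∩ B).Nonempty then true else false)

/-- `C` is valid relative to `B`: there is no class `Q ∈ U/~_U` intersecting `C` such
that some `v ∈ B ∩ Q` has closed neighborhood in `G[U]` disjoint from `C`. -/
def ValidClass (G : SimpleGraph V) (U B C : Set V) : Prop :=
  ¬ ∃ Q ∈ eqClasses G U, (Q ∩ C).Nonempty ∧
      ∃ v ∈ B ∩ Q, (insert v (indN G U v)) ∩ C = ∅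

/-- `Q_R Q_S ∈ E(H)`: every vertex of `Q_R` is adjacent to every vertex of `Q_S`. -/
def OpEdge (G : SimpleGraph V) (QR QS : Set V) : Prop :=
  ∀ u ∈ QR, ∀ v ∈ QS, G.Adj u v

/-- An `R`-type `ρ` and an `S`-type `σ` are compatible. -/
def CompatibleTypes (G : SimpleGraph V) (R S : Set V)
    (ρ : UType G R) (σ : UType G S) : Prop :=
  (¬ (ρ.2 = true ∧ σ.2 = true)) ∧
  (¬ ∃ (QR : Classes G R) (QS : Classes G S),
      OpEdge G QR.1 QS.1 ∧ ρ.1 QR = Desc.contains ∧ σ.1 QS = Desc.contains) ∧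
  (∀ Q : Classes G (R ∪ S),
    ((∃ QR : Classes G R, QR.1 ⊆ Q.1 ∧ ρ.1 QR = Desc.contains) ∨
     (∃ QS : Classes G S, QS.1 ⊆ Q.1 ∧ σ.1 QS = Desc.contains)) →
    ((∀ QR : Classes G R, QR.1 ⊆ Q.1 → ρ.1 QR = Desc.demand →
        ∃ QS : Classes G S, σ.1 QS = Desc.contains ∧ OpEdge G QR.1 QS.1) ∧
     (∀ QS : Classes G S, QS.1 ⊆ Q.1 → σ.1 QS = Desc.demand →
        ∃ QR : Classes G R, ρ.1 QR = Desc.contains ∧ OpEdge G QR.1 QS.1)))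

/-- The merge type of an `R`-type `ρ` and an `S`-type `σ`. -/
noncomputable def mergeType (G : SimpleGraph V) (R S : Set V)
    (ρ : UType G R) (σ : UType G S) : UType G (R ∪ S) :=
  (fun Q =>
    if (∃ QR : Classes G R, QR.1 ⊆ Q.1 ∧ ρ.1 QR = Desc.contains) ∨
       (∃ QS : Classes G S, QS.1 ⊆ Q.1 ∧ σ.1 QS = Desc.contains) then
      Desc.contains
    else if (∃ QR : Classes G R, QR.1 ⊆ Q.1 ∧ ρ.1 QR = Desc.demand ∧
              ∀ QS : Classes G S, OpEdge G QR.1 QS.1 → σ.1 QS ≠ Desc.contains) ∨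
            (∃ QS : Classes G S, QS.1 ⊆ Q.1 ∧ σ.1 QS = Desc.demand ∧
              ∀ QR : Classes G R, OpEdge G QR.1 QS.1 → ρ.1 QR ≠ Desc.contains) then
      Desc.demand
    else Desc.none,
   ρ.2 || σ.2)

/-- `((C_1, …, C_k), B)` is a partial `b`-coloring of `G[U]` with `k` colors:
the `C_i` partition `U` into independent sets of `G[U]`, `B ⊆ U`, and each color class
contains at most one vertex of `B`. -/
def IsPartialBColoring (G : SimpleGraph V) (U : Set V) {k : ℕ}
    (C : Fin k → Set V) (B : Set V) : Prop :=
  (⋃ i, C i) = U ∧ (Pairwise fun i j => Disjoint (C i) (C j)) ∧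
  (∀ i, IndepIn G U (C i)) ∧ B ⊆ U ∧ ∀ i, (C i ∩ B).Subsingleton

/-- A valid partial `b`-coloring of `G[U]`: every color class is valid relative to `B`. -/
def IsValidPartialBColoring (G : SimpleGraph V) (U : Set V) {k : ℕ}
    (C : Fin k → Set V) (B : Set V) : Prop :=
  IsPartialBColoring G U C B ∧ ∀ i, ValidClass G U B (C i)

/-- The `U`-signature of the partial `b`-coloring `(C, B)`: to each `U`-type `τ` it
assigns the number of color classes whose `U`-type relative to `B` is `τ`. -/
noncomputable def sigOf (G : SimpleGraph V) (U : Set V) {k : ℕ}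
    (C : Fin k → Set V) (B : Set V) : UType G U → ℕ :=
  fun τ => Nat.card {i : Fin k // typeOf G U B (C i) = τ}

/-- `σ` is a `U`-signature for `k` colors: the values of `σ` sum up to `k`. -/
def IsSignature (G : SimpleGraph V) (U : Set V) (k : ℕ) (σ : UType G U → ℕ) : Prop :=
  ∑ᶠ τ, σ τ = k

/-- A triple `(σT, σR, σS)` of signatures is compatible: there is an assignment `f` of
natural numbers to the edges of the merge skeleton (i.e. to the compatible pairs of an
`R`-type and an `S`-type) such that the sums of `f` over the edges incident to each
`R`-type `ρ`, to each `S`-type `σ`, and over the edges labeled by each merge type `τ`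
are `σR ρ`, `σS σ`, and `σT τ`, respectively. -/
def CompatibleSignatures (G : SimpleGraph V) (R S : Set V)
    (σT : UType G (R ∪ S) → ℕ) (σR : UType G R → ℕ) (σS : UType G S → ℕ) : Prop :=
  ∃ f : UType G R × UType G S → ℕ,
    (∀ p, ¬ CompatibleTypes G R S p.1 p.2 → f p = 0) ∧
    (∀ ρ, ∑ᶠ σ, f (ρ, σ) = σR ρ) ∧
    (∀ σ, ∑ᶠ ρ, f (ρ, σ) = σS σ) ∧
    (∀ τ, ∑ᶠ p ∈ {p : UType G R × UType G S | mergeType G R S p.1 p.2 = τ}, f p = σT τ)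

end BCol

section Counting

open Finset

theorem Fintype.card_subtype_comp_eq_sum {ι α γ : Type*} [Fintype ι] [Fintype α]
    [DecidableEq α] [DecidableEq γ] (q : ι → α) (F : α → γ) (c : γ) :
    Fintype.card {i // F (q i) = c} = ∑ a with F a = c, Fintype.card {i // q i = a} := by
  simp only [Fintype.card_subtype]
  rw [card_eq_sum_card_fiberwise (f := q) (t := {a | F a = c}) (by simp +contextual [Set.MapsTo])]
  refine Finset.sum_congr rfl fun a ha => ?_
  rw [filter_filter]
  refine congrArg Finset.card <| filter_congr fun i _ => ?_
  simp only [mem_filter, mem_univ, true_and] at ha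
  exact ⟨And.right, fun h => ⟨h ▸ ha, h⟩⟩

theorem Fintype.card_sigma_fin_subtype {α : Type*} [Fintype α] (f : α → ℕ) (P : α → Prop)
    [DecidablePred P] : Fintype.card {x : Σ a, Fin (f a) // P x.1} = ∑ a with P a, f a := by
  rw [Fintype.card_congr (Equiv.subtypeSigmaEquiv _ P), Fintype.card_sigma]
  simp only [Fintype.card_fin]
  exact (Finset.sum_subtype _ (by simp) _).symm

theorem exists_perm_card_pair_eq {ι α β : Type*} [Fintype ι] [Fintype α] [Fintype β]
    [DecidableEq α] [DecidableEq β] (g : ι → α) (h : ι → β) (f : α × β → ℕ)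
    (hg : ∀ a, ∑ b, f (a, b) = Fintype.card {i // g i = a})
    (hh : ∀ b, ∑ a, f (a, b) = Fintype.card {i // h i = b}) :
    ∃ π : Equiv.Perm ι, ∀ p, Fintype.card {i // (g i, h (π i)) = p} = f p := by
  -- `X` lists each pair `p` with multiplicity `f p`; the margin conditions say exactly that
  -- `g` and `h` have the same fibres as the projections of `X` to `α` and to `β`.
  let X := Σ p : α × β, Fin (f p)
  let eg : ι ≃ X := Equiv.ofFiberEquiv (f := g) (g := fun x : X => x.1.1) fun a =>
    Fintype.equivOfCardEq <| by
      rw [Fintype.card_sigma_fin_subtype f (·.1 = a), ← hg, sum_filter, Fintype.sum_prod_type,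
        sum_comm]
      simp
  let eh : ι ≃ X := Equiv.ofFiberEquiv (f := h) (g := fun x : X => x.1.2) fun b =>
    Fintype.equivOfCardEq <| by
      rw [Fintype.card_sigma_fin_subtype f (·.2 = b), ← hh, sum_filter,
        Fintype.sum_prod_type_right, sum_comm]
      simp
  have hpair (i : ι) : (g i, h (eh.symm (eg i))) = (eg i).1 := by
    rw [← Equiv.ofFiberEquiv_map (f := g) (g := fun x : X => x.1.1) _ i,
      ← Equiv.ofFiberEquiv_map (f := h) (g := fun x : X => x.1.2) _ (eh.symm (eg i)),
      Equiv.apply_symm_apply]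
  refine ⟨eg.trans eh.symm, fun p => ?_⟩
  simp only [Equiv.trans_apply, hpair]
  rw [Fintype.card_congr (eg.subtypeEquiv (q := fun x => x.1 = p) fun _ => Iff.rfl),
    Fintype.card_sigma_fin_subtype f (· = p)]
  simp [sum_filter]

end Counting

namespace BCol

variable {V : Type*}

instance : Fintype Desc := ⟨{.none, .contains, .demand}, fun x => by cases x <;> simp⟩

section Classes

variable {G : SimpleGraph V} {U T Q : Set V} {u v : V}

lemma mem_cls_self (hu : u ∈ U) : u ∈ cls G U u := ⟨hu, rfl⟩

lemma cls_mem_eqClasses (hu : u ∈ U) : cls G U u ∈ eqClasses G U := ⟨u, hu, rfl⟩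

lemma eq_cls_of_mem (hQ : Q ∈ eqClasses G U) (hv : v ∈ Q) : Q = cls G U v := by
  obtain ⟨u, -, rfl⟩ := hQ
  ext w
  simp only [cls, Set.mem_ofPred_eq, hv.2]

lemma cls_subset_cls_of_subset (hUT : U ⊆ T) (u : V) : cls G U u ⊆ cls G T u := by
  have hext (x : V) : extN G T x = extN G U x \ T := by
    simp [extN, Set.sdiff_sdiff, Set.union_eq_right.2 hUT]
  rintro v ⟨hvU, hv⟩
  exact ⟨hUT hvU, by rw [hext, hext, hv]⟩

lemma cls_subset_of_mem (hQ : Q ∈ eqClasses G T) (hUT : U ⊆ T) (hv : v ∈ Q) :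
    cls G U v ⊆ Q :=
  eq_cls_of_mem hQ hv ▸ cls_subset_cls_of_subset hUT v

lemma inter_nonempty_iff_exists_classes {C : Set V} (hQ : Q ∈ eqClasses G T) (hUT : U ⊆ T)
    (hC : C ⊆ U) : (Q ∩ C).Nonempty ↔ ∃ Q' : Classes G U, Q'.1 ⊆ Q ∧ (Q'.1 ∩ C).Nonempty := by
  constructor
  · rintro ⟨w, hwQ, hwC⟩
    exact ⟨⟨cls G U w, cls_mem_eqClasses (hC hwC)⟩, cls_subset_of_mem hQ hUT hwQ,
      w, mem_cls_self (hC hwC), hwC⟩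
  · rintro ⟨Q', hQ'Q, w, hwQ', hwC⟩
    exact ⟨w, hQ'Q hwQ', hwC⟩

end Classes

section OpEdge

variable {G : SimpleGraph V} {A B R S : Set V}

lemma opEdge_comm : OpEdge G A B ↔ OpEdge G B A :=
  ⟨fun h u hu w hw => (h w hw u hu).symm, fun h u hu w hw => (h w hw u hu).symm⟩

lemma opEdge_cls (hRS : Disjoint R S) {u w : V} (hw : w ∈ S) (hadj : G.Adj u w) :
    OpEdge G (cls G R u) (cls G S w) := by
  rintro u' ⟨hu'R, hu'⟩ w' ⟨-, hw'⟩
  have hwu' : w ∈ extN G R u' := hu' ▸ ⟨hadj, Set.disjoint_right.1 hRS hw⟩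
  have hu'w' : u' ∈ extN G S w' := hw' ▸ ⟨hwu'.1.symm, Set.disjoint_left.1 hRS hu'R⟩
  exact hu'w'.1.symm

end OpEdge

section Desc

variable {G : SimpleGraph V} {U B C : Set V} {Q : Classes G U}

lemma descOf_eq_contains_iff : descOf G U B C Q = .contains ↔ (Q.1 ∩ C).Nonempty := by
  unfold descOf
  split_ifs <;> simp_all

lemma descOf_eq_demand_iff :
    descOf G U B C Q = .demand ↔
      ¬ (Q.1 ∩ C).Nonempty ∧ ∃ v ∈ B ∩ Q.1, indN G U v ∩ C = ∅ := by
  unfold descOf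
  split_ifs <;> simp_all

lemma descOf_eq_ite {P₁ P₂ : Prop} [Decidable P₁] [Decidable P₂]
    (h₁ : (Q.1 ∩ C).Nonempty ↔ P₁) (h₂ : ¬ P₁ → ((∃ v ∈ B ∩ Q.1, indN G U v ∩ C = ∅) ↔ P₂)) :
    descOf G U B C Q = if P₁ then .contains else if P₂ then .demand else .none := by
  unfold descOf
  by_cases hP₁ : P₁
  · rw [if_pos (h₁.2 hP₁), if_pos hP₁]
  · rw [if_neg (mt h₁.1 hP₁), if_neg hP₁]
    exact if_congr (h₂ hP₁) rfl rfl

lemma typeOf_fst : (typeOf G U B C).1 = descOf G U B C := rfl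

lemma typeOf_snd_eq_true_iff : (typeOf G U B C).2 = true ↔ (C ∩ B).Nonempty := by
  simp [typeOf]

end Desc

section Union

variable {G : SimpleGraph V} {R S BR BS CR CS Q : Set V} {v : V}

lemma union_inter_union_eq (hRS : Disjoint R S) (hBR : BR ⊆ R) (hBS : BS ⊆ S) (hCR : CR ⊆ R)
    (hCS : CS ⊆ S) : (CR ∪ CS) ∩ (BR ∪ BS) = CR ∩ BR ∪ CS ∩ BS := by
  ext x
  have : x ∈ R → x ∉ S := fun h => Set.disjoint_left.1 hRS h
  have := @hBR x; have := @hBS x; have := @hCR x; have := @hCS x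
  simp only [Set.mem_inter_iff, Set.mem_union]
  tauto

lemma indN_union_inter_eq_empty_iff (hRS : Disjoint R S) (hCR : CR ⊆ R) (hCS : CS ⊆ S)
    (hv : v ∈ R) :
    indN G (R ∪ S) v ∩ (CR ∪ CS) = ∅ ↔
      indN G R v ∩ CR = ∅ ∧
        ∀ QS : Classes G S, OpEdge G (cls G R v) QS.1 → ¬ (QS.1 ∩ CS).Nonempty := by
  have hsplit : indN G (R ∪ S) v ∩ (CR ∪ CS) = indN G R v ∩ CR ∪ G.neighborSet v ∩ CS := by
    ext x
    have := @hCR x; have := @hCS x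
    simp only [indN, Set.mem_inter_iff, Set.mem_union]
    tauto
  rw [hsplit, Set.union_empty_iff, and_congr_right_iff]
  refine fun _ => ⟨fun h QS hop ⟨w, hwQ, hwC⟩ => ?_, fun h => ?_⟩
  · exact h.subset ⟨hop v (mem_cls_self hv) w hwQ, hwC⟩
  · refine Set.eq_empty_of_forall_notMem fun w ⟨hadj, hwC⟩ => ?_
    exact h ⟨cls G S w, cls_mem_eqClasses (hCS hwC)⟩ (opEdge_cls hRS (hCS hwC) hadj)
      ⟨w, mem_cls_self (hCS hwC), hwC⟩

lemma exists_demand_vertex_iff (hRS : Disjoint R S) (hBR : BR ⊆ R) (hCR : CR ⊆ R)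
    (hCS : CS ⊆ S) (hQ : Q ∈ eqClasses G (R ∪ S)) (hQC : ¬ (Q ∩ CR).Nonempty) :
    (∃ v ∈ BR ∩ Q, indN G (R ∪ S) v ∩ (CR ∪ CS) = ∅) ↔
      ∃ QR : Classes G R, QR.1 ⊆ Q ∧ descOf G R BR CR QR = .demand ∧
        ∀ QS : Classes G S, OpEdge G QR.1 QS.1 → descOf G S BS CS QS ≠ .contains := by
  simp only [descOf_eq_demand_iff, descOf_eq_contains_iff, ne_eq]
  constructor
  · rintro ⟨v, ⟨hvB, hvQ⟩, hv⟩
    have hvR := hBR hvB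
    have hclsQ := cls_subset_of_mem hQ Set.subset_union_left hvQ
    rw [indN_union_inter_eq_empty_iff hRS hCR hCS hvR] at hv
    exact ⟨⟨cls G R v, cls_mem_eqClasses hvR⟩, hclsQ,
      ⟨fun h => hQC (h.mono (Set.inter_subset_inter_left _ hclsQ)),
        v, ⟨hvB, mem_cls_self hvR⟩, hv.1⟩, hv.2⟩
  · rintro ⟨QR, hQRQ, ⟨-, v, ⟨hvB, hvQR⟩, hvN⟩, hop⟩
    refine ⟨v, ⟨hvB, hQRQ hvQR⟩, (indN_union_inter_eq_empty_iff hRS hCR hCS (hBR hvB)).2 ?_⟩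
    exact ⟨hvN, eq_cls_of_mem QR.2 hvQR ▸ hop⟩

lemma typeOf_union (hRS : Disjoint R S) (hBR : BR ⊆ R) (hBS : BS ⊆ S) (hCR : CR ⊆ R)
    (hCS : CS ⊆ S) :
    typeOf G (R ∪ S) (BR ∪ BS) (CR ∪ CS) =
      mergeType G R S (typeOf G R BR CR) (typeOf G S BS CS) := by
  have hcont (Q : Classes G (R ∪ S)) :
      ((Q.1 ∩ CR).Nonempty ↔ ∃ QR : Classes G R, QR.1 ⊆ Q.1 ∧ descOf G R BR CR QR = .contains) ∧
      ((Q.1 ∩ CS).Nonempty ↔ ∃ QS : Classes G S, QS.1 ⊆ Q.1 ∧ descOf G S BS CS QS = .contains) := by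
    simp only [descOf_eq_contains_iff]
    exact ⟨inter_nonempty_iff_exists_classes Q.2 Set.subset_union_left hCR,
      inter_nonempty_iff_exists_classes Q.2 Set.subset_union_right hCS⟩
  refine Prod.ext (funext fun Q => descOf_eq_ite ?_ fun hnc => ?_) ?_
  · rw [typeOf_fst, typeOf_fst, Set.inter_union_distrib_left, Set.union_nonempty, (hcont Q).1,
      (hcont Q).2]
  · rw [typeOf_fst, typeOf_fst, ← (hcont Q).1, ← (hcont Q).2, not_or] at hnc
    have hS := exists_demand_vertex_iff (BS := BR) hRS.symm hBS hCS hCR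
      (by rw [Set.union_comm]; exact Q.2) hnc.2
    simp only [typeOf_fst, Set.union_inter_distrib_right, Set.mem_union, or_and_right, exists_or]
    refine or_congr (exists_demand_vertex_iff hRS hBR hCR hCS Q.2 hnc.1) ?_
    simpa only [Set.union_comm S R, Set.union_comm CS CR, opEdge_comm] using hS
  · simp only [mergeType, typeOf, union_inter_union_eq hRS hBR hBS hCR hCS, Set.union_nonempty]
    by_cases h₁ : (CR ∩ BR).Nonempty <;> by_cases h₂ : (CS ∩ BS).Nonempty <;> simp [h₁, h₂]

lemma IndepIn.union (hRS : Disjoint R S) (hR : IndepIn G R CR) (hS : IndepIn G S CS)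
    (hcomp : CompatibleTypes G R S (typeOf G R BR CR) (typeOf G S BS CS)) :
    IndepIn G (R ∪ S) (CR ∪ CS) := by
  have hcross : ∀ u ∈ CR, ∀ w ∈ CS, ¬ G.Adj u w := fun u hu w hw hadj =>
    hcomp.2.1 ⟨⟨cls G R u, cls_mem_eqClasses (hR.1 hu)⟩, ⟨cls G S w, cls_mem_eqClasses (hS.1 hw)⟩,
      opEdge_cls hRS (hS.1 hw) hadj, descOf_eq_contains_iff.2 ⟨u, mem_cls_self (hR.1 hu), hu⟩,
      descOf_eq_contains_iff.2 ⟨w, mem_cls_self (hS.1 hw), hw⟩⟩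
  refine ⟨Set.union_subset_union hR.1 hS.1, ?_⟩
  rintro u (hu | hu) w (hw | hw)
  · exact hR.2 u hu w hw
  · exact hcross u hu w hw
  · exact fun hadj => hcross w hw u hu hadj.symm
  · exact hS.2 u hu w hw

lemma inter_union_subsingleton (hRS : Disjoint R S) (hBR : BR ⊆ R) (hBS : BS ⊆ S)
    (hCR : CR ⊆ R) (hCS : CS ⊆ S) (hR : (CR ∩ BR).Subsingleton) (hS : (CS ∩ BS).Subsingleton)
    (hcomp : CompatibleTypes G R S (typeOf G R BR CR) (typeOf G S BS CS)) :
    ((CR ∪ CS) ∩ (BR ∪ BS)).Subsingleton := by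
  have hbits := hcomp.1
  rw [typeOf_snd_eq_true_iff, typeOf_snd_eq_true_iff, not_and] at hbits
  rw [union_inter_union_eq hRS hBR hBS hCR hCS]
  rcases (CR ∩ BR).eq_empty_or_nonempty with h | h
  · rwa [h, Set.empty_union]
  · rwa [Set.not_nonempty_iff_eq_empty.1 (hbits h), Set.union_empty]

lemma insert_indN_union_inter_nonempty (hRS : Disjoint R S) (hBR : BR ⊆ R) (hCR : CR ⊆ R)
    (hCS : CS ⊆ S) (hR : ValidClass G R BR CR) (hvB : v ∈ BR)
    (hdem : descOf G R BR CR ⟨cls G R v, cls_mem_eqClasses (hBR hvB)⟩ = .demand →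
      ∃ QS : Classes G S, descOf G S BS CS QS = .contains ∧ OpEdge G (cls G R v) QS.1) :
    (insert v (indN G (R ∪ S) v) ∩ (CR ∪ CS)).Nonempty := by
  have hvR := hBR hvB
  by_contra h
  rw [Set.not_nonempty_iff_eq_empty] at h
  have hvC : v ∉ CR ∪ CS := fun hv => h.subset ⟨Set.mem_insert _ _, hv⟩
  rw [Set.insert_inter_of_notMem hvC, indN_union_inter_eq_empty_iff hRS hCR hCS hvR] at h
  obtain ⟨hNR, hNS⟩ := h
  by_cases hcls : (cls G R v ∩ CR).Nonempty
  · refine hR ⟨cls G R v, cls_mem_eqClasses hvR, hcls, v, ⟨hvB, mem_cls_self hvR⟩, ?_⟩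
    rwa [Set.insert_inter_of_notMem fun hv => hvC (Or.inl hv)]
  · obtain ⟨QS, hQS, hop⟩ :=
      hdem (descOf_eq_demand_iff.2 ⟨hcls, v, ⟨hvB, mem_cls_self hvR⟩, hNR⟩)
    exact hNS QS hop (descOf_eq_contains_iff.1 hQS)

lemma ValidClass.union (hRS : Disjoint R S) (hBR : BR ⊆ R) (hBS : BS ⊆ S)
    (hCR : CR ⊆ R) (hCS : CS ⊆ S) (hR : ValidClass G R BR CR) (hS : ValidClass G S BS CS)
    (hcomp : CompatibleTypes G R S (typeOf G R BR CR) (typeOf G S BS CS)) :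
    ValidClass G (R ∪ S) (BR ∪ BS) (CR ∪ CS) := by
  rintro ⟨Q, hQ, hQC, v, ⟨hvB, hvQ⟩, hv⟩
  rw [Set.inter_union_distrib_left, Set.union_nonempty,
    inter_nonempty_iff_exists_classes hQ Set.subset_union_left hCR,
    inter_nonempty_iff_exists_classes hQ Set.subset_union_right hCS] at hQC
  obtain ⟨hdemR, hdemS⟩ := hcomp.2.2 ⟨Q, hQ⟩ <| by
    simpa only [typeOf_fst, descOf_eq_contains_iff] using hQC
  refine Set.not_nonempty_iff_eq_empty.2 hv ?_
  rcases hvB with hvB | hvB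
  · exact insert_indN_union_inter_nonempty hRS hBR hCR hCS hR hvB
      (hdemR _ (cls_subset_of_mem hQ Set.subset_union_left hvQ))
  · have := insert_indN_union_inter_nonempty (BS := BR) hRS.symm hBS hCS hCR hS hvB fun hd =>
      let ⟨QR, hQR, hop⟩ := hdemS _ (cls_subset_of_mem hQ Set.subset_union_right hvQ) hd
      ⟨QR, hQR, opEdge_comm.1 hop⟩
    rwa [Set.union_comm S R, Set.union_comm CS CR] at this

end Union

section Colorings

variable {G : SimpleGraph V} {U R S B BR BS : Set V} {k : ℕ} {C CR CS : Fin k → Set V}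

lemma IsValidPartialBColoring.comp_perm (h : IsValidPartialBColoring G U C B)
    (π : Equiv.Perm (Fin k)) : IsValidPartialBColoring G U (C ∘ π) B := by
  obtain ⟨⟨hcover, hdisj, hind, hB, hsub⟩, hvalid⟩ := h
  exact ⟨⟨(π.surjective.iUnion_comp C).trans hcover, hdisj.comp_of_injective π.injective,
    fun i => hind (π i), hB, fun i => hsub (π i)⟩, fun i => hvalid (π i)⟩

lemma IsValidPartialBColoring.union (hRS : Disjoint R S) (hR : IsValidPartialBColoring G R CR BR)
    (hS : IsValidPartialBColoring G S CS BS)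
    (hcomp : ∀ i, CompatibleTypes G R S (typeOf G R BR (CR i)) (typeOf G S BS (CS i))) :
    IsValidPartialBColoring G (R ∪ S) (fun i => CR i ∪ CS i) (BR ∪ BS) := by
  obtain ⟨⟨hcoverR, hdisjR, hindR, hBR, hsubR⟩, hvalidR⟩ := hR
  obtain ⟨⟨hcoverS, hdisjS, hindS, hBS, hsubS⟩, hvalidS⟩ := hS
  have hdisjRS (i j : Fin k) : Disjoint (CR i) (CS j) := hRS.mono (hindR i).1 (hindS j).1
  refine ⟨⟨?_, fun i j hij => ?_, fun i => (hindR i).union hRS (hindS i) (hcomp i),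
    Set.union_subset_union hBR hBS, fun i => ?_⟩, fun i => ?_⟩
  · rw [Set.iUnion_union_distrib, hcoverR, hcoverS]
  · exact Disjoint.union_left ((hdisjR hij).union_right (hdisjRS i j))
      ((hdisjRS j i).symm.union_right (hdisjS hij))
  · exact inter_union_subsingleton hRS hBR hBS (hindR i).1 (hindS i).1 (hsubR i) (hsubS i)
      (hcomp i)
  · exact (hvalidR i).union hRS hBR hBS (hindR i).1 (hindS i).1 (hvalidS i) (hcomp i)

lemma sigOf_union (hRS : Disjoint R S) (hR : IsPartialBColoring G R CR BR)
    (hS : IsPartialBColoring G S CS BS) (τ : UType G (R ∪ S)) :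
    sigOf G (R ∪ S) (fun i => CR i ∪ CS i) (BR ∪ BS) τ =
      Nat.card {i // mergeType G R S (typeOf G R BR (CR i)) (typeOf G S BS (CS i)) = τ} := by
  obtain ⟨-, -, hindR, hBR, -⟩ := hR
  obtain ⟨-, -, hindS, hBS, -⟩ := hS
  exact Nat.card_congr <| Equiv.subtypeEquivRight fun i => by
    rw [typeOf_union hRS hBR hBS (hindR i).1 (hindS i).1]

end Colorings

theorem merge_signatures_general {V : Type*} [Fintype V] (G : SimpleGraph V)
    (R S : Set V) (hRS : Disjoint R S) (k : ℕ)
    (σT : UType G (R ∪ S) → ℕ) (σR : UType G R → ℕ) (σS : UType G S → ℕ)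
    (hcomp : CompatibleSignatures G R S σT σR σS)
    (hR : ∃ (C : Fin k → Set V) (B : Set V),
      IsValidPartialBColoring G R C B ∧ sigOf G R C B = σR)
    (hS : ∃ (C : Fin k → Set V) (B : Set V),
      IsValidPartialBColoring G S C B ∧ sigOf G S C B = σS) :
    ∃ (C : Fin k → Set V) (B : Set V),
      IsValidPartialBColoring G (R ∪ S) C B ∧ sigOf G (R ∪ S) C B = σT := by
  obtain ⟨CR, BR, hR, rfl⟩ := hR
  obtain ⟨CS, BS, hS, rfl⟩ := hS
  obtain ⟨f, hf0, hfR, hfS, hfT⟩ := hcomp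
  set tR := fun i => typeOf G R BR (CR i)
  set tS := fun j => typeOf G S BS (CS j)
  obtain ⟨π, hπ⟩ := exists_perm_card_pair_eq tR tS f
    (fun ρ => by rw [← finsum_eq_sum_of_fintype, hfR, sigOf, Nat.card_eq_fintype_card])
    (fun σ => by rw [← finsum_eq_sum_of_fintype, hfS, sigOf, Nat.card_eq_fintype_card])
  have hcompat (i : Fin k) : CompatibleTypes G R S (tR i) (tS (π i)) := by
    by_contra hnc
    have hfiber := hπ (tR i, tS (π i))
    rw [hf0 _ hnc, Fintype.card_eq_zero_iff] at hfiber
    exact hfiber.false ⟨i, rfl⟩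
  refine ⟨fun i => CR i ∪ CS (π i), BR ∪ BS, hR.union hRS (hS.comp_perm π) hcompat,
    funext fun τ => (sigOf_union hRS hR.1 (hS.comp_perm π).1 τ).trans ?_⟩
  rw [Nat.card_eq_fintype_card]
  refine (Fintype.card_subtype_comp_eq_sum (fun i => (tR i, tS (π i)))
    (fun p => mergeType G R S p.1 p.2) τ).trans ?_
  rw [← hfT τ, ← finsum_mem_coe_finset]
  simp [hπ]

/-- Merging signatures. Let `R, S` be disjoint vertex subsets of a finite graph `G` and
`T = R ∪ S`. Let `σT`, `σR`, `σS` be a `T`-, `R`- and `S`-signature such that the triple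
`(σT, σR, σS)` is compatible, there is a valid partial `b`-coloring of `G[R]` with `k`
colors whose `R`-signature is `σR`, and there is a valid partial `b`-coloring of `G[S]`
with `k` colors whose `S`-signature is `σS`. Then there is a valid partial `b`-coloring
of `G[T]` with `k` colors whose `T`-signature is `σT`. -/
theorem merge_signatures {V : Type*} [Fintype V] [DecidableEq V] (G : SimpleGraph V)
    (R S : Set V) (hRS : Disjoint R S) (k : ℕ)
    (σT : UType G (R ∪ S) → ℕ) (σR : UType G R → ℕ) (σS : UType G S → ℕ)
    (hσT : IsSignature G (R ∪ S) k σT)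
    (hσR : IsSignature G R k σR)
    (hσS : IsSignature G S k σS)
    (hcomp : CompatibleSignatures G R S σT σR σS)
    (hR : ∃ (C : Fin k → Set V) (B : Set V),
      IsValidPartialBColoring G R C B ∧ sigOf G R C B = σR)
    (hS : ∃ (C : Fin k → Set V) (B : Set V),
      IsValidPartialBColoring G S C B ∧ sigOf G S C B = σS) :
    ∃ (C : Fin k → Set V) (B : Set V),
      IsValidPartialBColoring G (R ∪ S) C B ∧ sigOf G (R ∪ S) C B = σT :=
  merge_signatures_general G R S hRS k σT σR σS hcomp hR hS

end BCol
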